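/- The space [P_n(ℝ²)]² of vector-valued polynomials of degree at most n in two variables decomposes as a direct sum [P_n]² = rot(P_{n+1}) ⊕ x·P_{n-1}, where rot(φ) = (∂₂φ, -∂₁φ) is the vector rotation (rotated gradient) of a scalar polynomial. -/

import Mathlib

/-!
Write `x × w := x₁ w₂ - x₂ w₁` for a vector polynomial `w`. Then `x × (x q) = 0`, while
`x × rot φ = -E φ` for the Euler operator `E = x₁ ∂₁ + x₂ ∂₂`, which multiplies each
monomial by its degree. Since `x × v` has no constant term, `E φ = -(x × v)` has a solution
`φ` of degree at most `n + 1`; then `x × (v - rot φ) = 0`, and because `x₁` is prime this forces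
`v - rot φ = x q`. Conversely `E φ` determines `φ` up to a constant, hence determines `rot φ`.
-/

open MvPolynomial

noncomputable section

abbrev Poly2 := MvPolynomial (Fin 2) ℝ

/-- `p ∈ P_m(ℝ²)` (total degree at most `m`, with `P_m = {0}` for `m < 0`). -/
def degLE (m : ℤ) (p : Poly2) : Prop := p = 0 ∨ (p.totalDegree : ℤ) ≤ m

/-- Rotated gradient `rot(φ) = (∂₂φ, -∂₁φ)` of a scalar polynomial. -/
def prot2 (q : Poly2) : Fin 2 → Poly2 := ![pderiv 1 q, -(pderiv 0 q)]

/-- The vector field `x · q = (x₁ q, x₂ q)` for a scalar polynomial `q`. -/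
def xmul2 (q : Poly2) : Fin 2 → Poly2 := fun i => X i * q

namespace MvPolynomial

section Euler

variable {σ R : Type*} [CommRing R]

def euler [Fintype σ] (p : MvPolynomial σ R) : MvPolynomial σ R := ∑ i, X i * pderiv i p

theorem coeff_X_mul_pderiv (i : σ) (p : MvPolynomial σ R) (m : σ →₀ ℕ) :
    coeff m (X i * pderiv i p) = m i * coeff m p := by
  induction p using MvPolynomial.induction_on' with
  | monomial u a =>
    classical
    rw [X_mul_pderiv_monomial, coeff_smul, coeff_monomial]
    split_ifs with h
    · rw [h, nsmul_eq_mul]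
    · rw [smul_zero, mul_zero]
  | add p q hp hq => simp only [map_add, mul_add, coeff_add, hp, hq]

theorem coeff_euler [Fintype σ] (p : MvPolynomial σ R) (m : σ →₀ ℕ) :
    coeff m (euler p) = m.degree * coeff m p := by
  simp only [euler, coeff_sum, coeff_X_mul_pderiv, Finsupp.degree_eq_sum, Nat.cast_sum,
    Finset.sum_mul]

theorem totalDegree_pderiv_le [IsDomain R] (i : σ) (p : MvPolynomial σ R) :
    (pderiv i p).totalDegree ≤ p.totalDegree - 1 := by
  rcases eq_or_ne (pderiv i p) 0 with h | h
  · simp [h]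
  have hsupp : (X i * pderiv i p).support ⊆ p.support := fun m hm => by
    rw [mem_support_iff, coeff_X_mul_pderiv] at hm
    exact mem_support_iff.mpr (right_ne_zero_of_mul hm)
  have := totalDegree_le_of_support_subset hsupp
  rw [totalDegree_mul_of_isDomain (X_ne_zero i) h, totalDegree_X] at this
  omega

theorem pderiv_eq_of_euler_eq [Fintype σ] [IsDomain R] [CharZero R] {p q : MvPolynomial σ R}
    (h : euler p = euler q) (i : σ) : pderiv i p = pderiv i q := by
  ext m
  have hm : m + Finsupp.single i 1 ≠ 0 := by simp
  have := congrArg (coeff (m + Finsupp.single i 1)) h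
  rw [coeff_euler, coeff_euler] at this
  rw [coeff_pderiv, coeff_pderiv,
    mul_left_cancel₀ (by exact_mod_cast (Finsupp.degree_eq_zero_iff _).not.mpr hm) this]

end Euler

section EulerInv

variable {σ K : Type*} [Field K]

-- The constant coefficient is divided by `0`, giving `0`.
def eulerInv (r : MvPolynomial σ K) : MvPolynomial σ K :=
  ∑ a ∈ r.support, monomial a (coeff a r / a.degree)

theorem coeff_eulerInv (r : MvPolynomial σ K) (m : σ →₀ ℕ) :
    coeff m (eulerInv r) = coeff m r / m.degree := by
  classical
  simp only [eulerInv, coeff_sum, coeff_monomial, Finset.sum_ite_eq', mem_support_iff]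
  split_ifs with h
  · rfl
  · rw [not_not.mp h, zero_div]

theorem euler_eulerInv [Fintype σ] [CharZero K] {r : MvPolynomial σ K} (h : coeff 0 r = 0) :
    euler (eulerInv r) = r := by
  ext m
  rw [coeff_euler, coeff_eulerInv]
  rcases eq_or_ne m 0 with rfl | hm
  · simp [h]
  · exact mul_div_cancel₀ _ (by exact_mod_cast (Finsupp.degree_eq_zero_iff _).not.mpr hm)

theorem totalDegree_eulerInv_le (r : MvPolynomial σ K) :
    (eulerInv r).totalDegree ≤ r.totalDegree :=
  totalDegree_le_of_support_subset fun m hm => by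
    rw [mem_support_iff, coeff_eulerInv] at hm
    exact mem_support_iff.mpr (div_ne_zero_iff.mp hm).1

end EulerInv

end MvPolynomial

def cross2 (w : Fin 2 → Poly2) : Poly2 := X 0 * w 1 - X 1 * w 0

theorem cross2_add (v w : Fin 2 → Poly2) : cross2 (v + w) = cross2 v + cross2 w := by
  simp only [cross2, Pi.add_apply]; ring

theorem cross2_sub (v w : Fin 2 → Poly2) : cross2 (v - w) = cross2 v - cross2 w := by
  simp only [cross2, Pi.sub_apply]; ring

theorem cross2_prot2 (φ : Poly2) : cross2 (prot2 φ) = -euler φ := by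
  simp only [cross2, prot2, euler, Fin.sum_univ_two, Matrix.cons_val_zero, Matrix.cons_val_one]
  ring

theorem cross2_xmul2 (q : Poly2) : cross2 (xmul2 q) = 0 := by
  simp only [cross2, xmul2]; ring

theorem coeff_zero_cross2 (w : Fin 2 → Poly2) : coeff 0 (cross2 w) = 0 := by
  simp [cross2, coeff_X_mul']

theorem totalDegree_cross2_le {n : ℕ} {w : Fin 2 → Poly2}
    (hw : ∀ i, (w i).totalDegree ≤ n) :
    (cross2 w).totalDegree ≤ n + 1 := by
  have h : ∀ i j, (X i * w j).totalDegree ≤ n + 1 := fun i j =>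
    (totalDegree_mul _ _).trans (by rw [totalDegree_X]; linarith [hw j])
  exact (totalDegree_sub _ _).trans (max_le (h 0 1) (h 1 0))

theorem exists_xmul2_of_cross2_eq_zero {w : Fin 2 → Poly2} (hw : cross2 w = 0) :
    ∃ q, w = xmul2 q := by
  have hw' : X 0 * w 1 = X 1 * w 0 := sub_eq_zero.mp hw
  obtain ⟨q, hq⟩ : X 0 ∣ w 0 :=
    (X_prime.dvd_or_dvd ⟨w 1, hw'.symm⟩).resolve_left (by simp [X_dvd_X])
  have hw1 : w 1 = X 1 * q :=
    mul_left_cancel₀ (X_ne_zero 0) (by rw [hw', hq]; ring)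
  exact ⟨q, funext fun i => by fin_cases i <;> assumption⟩

theorem degLE_natCast_iff {n : ℕ} {p : Poly2} : degLE n p ↔ p.totalDegree ≤ n := by
  refine ⟨?_, fun h => Or.inr (by exact_mod_cast h)⟩
  rintro (rfl | h)
  · simp
  · exact_mod_cast h

theorem degLE_sub_one_of_X_mul {n : ℤ} {q : Poly2} (i : Fin 2) (h : degLE n (X i * q)) :
    degLE (n - 1) q := by
  rcases eq_or_ne q 0 with hq | hq
  · exact Or.inl hq
  rcases h with h | h
  · exact absurd h (mul_ne_zero (X_ne_zero i) hq)
  rw [totalDegree_mul_of_isDomain (X_ne_zero i) hq, totalDegree_X] at h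
  right; push_cast at h; linarith

theorem exists_eq_prot2_add_xmul2 {n : ℕ} {v : Fin 2 → Poly2}
    (hv : ∀ i, (v i).totalDegree ≤ n) :
    ∃ φ q, φ.totalDegree ≤ n + 1 ∧ degLE ((n : ℤ) - 1) q ∧ v = prot2 φ + xmul2 q := by
  set φ := eulerInv (-cross2 v)
  have hφ : φ.totalDegree ≤ n + 1 :=
    (totalDegree_eulerInv_le _).trans ((totalDegree_neg _).trans_le (totalDegree_cross2_le hv))
  have hcross : cross2 (v - prot2 φ) = 0 := by
    rw [cross2_sub, cross2_prot2, euler_eulerInv (by rw [coeff_neg, coeff_zero_cross2, neg_zero])]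
    ring
  obtain ⟨q, hq⟩ := exists_xmul2_of_cross2_eq_zero hcross
  have hdeg : degLE n (X 0 * q) := by
    rw [degLE_natCast_iff, ← show (v - prot2 φ) 0 = X 0 * q from congrFun hq 0]
    refine (totalDegree_sub _ _).trans (max_le (hv 0) ?_)
    exact (totalDegree_pderiv_le 1 φ).trans (by omega)
  exact ⟨φ, q, hφ, degLE_sub_one_of_X_mul 0 hdeg, (sub_eq_iff_eq_add').mp hq⟩

theorem prot2_eq_of_prot2_add_xmul2_eq {φ φ' q q' : Poly2}
    (h : prot2 φ + xmul2 q = prot2 φ' + xmul2 q') : prot2 φ = prot2 φ' := by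
  have hE : euler φ = euler φ' := by
    simpa [cross2_add, cross2_prot2, cross2_xmul2] using congrArg cross2 h
  simp only [prot2, pderiv_eq_of_euler_eq hE]

/-- `[P_n(ℝ²)]² = rot(P_{n+1}) ⊕ x · P_{n-1}`: every vector polynomial of degree at
most `n` decomposes uniquely as a sum of a rotated gradient of a polynomial of degree
at most `n+1` and `x` times a scalar polynomial of degree at most `n-1`. -/
theorem poly_decomposition_2d_rot_x (n : ℕ) (v : Fin 2 → Poly2)
    (hv : ∀ i, degLE (n : ℤ) (v i)) :
    ∃! gc : (Fin 2 → Poly2) × (Fin 2 → Poly2),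
      (∃ q : Poly2, degLE ((n : ℤ) + 1) q ∧ gc.1 = prot2 q) ∧
      (∃ q : Poly2, degLE ((n : ℤ) - 1) q ∧ gc.2 = xmul2 q) ∧
      v = gc.1 + gc.2 := by
  obtain ⟨φ, q, hφ, hq, rfl⟩ :=
    exists_eq_prot2_add_xmul2 fun i => degLE_natCast_iff.mp (hv i)
  refine ⟨(prot2 φ, xmul2 q), ⟨⟨φ, ?_, rfl⟩, ⟨q, hq, rfl⟩, rfl⟩, ?_⟩
  · exact_mod_cast degLE_natCast_iff.mpr hφ
  rintro ⟨_, _⟩ ⟨⟨φ', -, rfl⟩, ⟨q', -, rfl⟩, h⟩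
  have hrot := prot2_eq_of_prot2_add_xmul2_eq h.symm
  rw [hrot] at h
  exact Prod.ext hrot (add_left_cancel h).symm
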